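/- arXiv:1805.03811 — 2 statements merged into one kernel-verified Lean document; each statement's English description precedes it below -/
import Mathlib

section
/- Let λ, μ be real numbers with μ > 0 and λ + μ > 0. Let ξ¹, ξ² ∈ ℝ³ be unit vectors, and let τ¹, τ² ∈ ℝ satisfy (τ¹)² = λ + 2μ, (τ²)² = μ, and τ¹τ² = √(μ(λ + 2μ)) (so ζ¹ = (τ¹, ξ¹) is P-characteristic, ζ² = (τ², ξ²) is S-characteristic, and they lie on the same half of the light cone). Then for b ∈ ℝ, the equality (τ¹ + bτ²)² = (λ + 2μ)·|ξ¹ + bξ²|² holds if and only if b = 0 or b = 2(√(μ(λ + 2μ)) − (λ + 2μ)(ξ¹·ξ²))/(λ + μ). (Characterization of the P-characteristic combinations arising from a P–S interaction.) -/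
def dot (x y : Fin 3 → ℝ) : ℝ := ∑ i, x i * y i

lemma dot_add_smul_self (x y : Fin 3 → ℝ) (b : ℝ) :
    dot (x + b • y) (x + b • y) = dot x x + 2 * b * dot x y + b ^ 2 * dot y y := by
  simp only [dot, Pi.add_apply, Pi.smul_apply, smul_eq_mul, Finset.mul_sum,
    ← Finset.sum_add_distrib]
  exact Finset.sum_congr rfl fun i _ => by ring

lemma mul_sub_mul_eq_zero_iff {a b c : ℝ} (ha : a ≠ 0) :
    b * (c - a * b) = 0 ↔ b = 0 ∨ b = c / a := by
  rw [mul_eq_zero, sub_eq_zero, eq_div_iff ha, mul_comm b a, eq_comm (a := c)]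

theorem ps_interaction_P_characterization_general (lam mu : ℝ) (hlm : 0 < lam + mu)
    (ξ1 ξ2 : Fin 3 → ℝ) (hξ1 : dot ξ1 ξ1 = 1) (hξ2 : dot ξ2 ξ2 = 1)
    (τ1 τ2 : ℝ) (hτ1 : τ1 ^ 2 = lam + 2 * mu) (hτ2 : τ2 ^ 2 = mu)
    (hτ12 : τ1 * τ2 = Real.sqrt (mu * (lam + 2 * mu))) :
    ∀ b : ℝ,
      (τ1 + b * τ2) ^ 2 = (lam + 2 * mu) * dot (ξ1 + b • ξ2) (ξ1 + b • ξ2) ↔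
      b = 0 ∨
        b = 2 * (Real.sqrt (mu * (lam + 2 * mu)) - (lam + 2 * mu) * dot ξ1 ξ2)
              / (lam + mu) := by
  intro b
  -- The P-symbol along the line ζ¹ + b ζ² vanishes at b = 0, so it is b times a linear factor.
  have factor : (τ1 + b * τ2) ^ 2 - (lam + 2 * mu) * dot (ξ1 + b • ξ2) (ξ1 + b • ξ2) =
      b * (2 * (Real.sqrt (mu * (lam + 2 * mu)) - (lam + 2 * mu) * dot ξ1 ξ2)
        - (lam + mu) * b) := by
    rw [dot_add_smul_self, hξ1, hξ2]
    linear_combination hτ1 + 2 * b * hτ12 + b ^ 2 * hτ2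
  rw [← sub_eq_zero, factor, mul_sub_mul_eq_zero_iff hlm.ne']

/-- Characterization of the P-characteristic combinations arising from a P–S
interaction. -/
theorem ps_interaction_P_characterization (lam mu : ℝ) (hmu : 0 < mu) (hlm : 0 < lam + mu)
    (ξ1 ξ2 : Fin 3 → ℝ) (hξ1 : dot ξ1 ξ1 = 1) (hξ2 : dot ξ2 ξ2 = 1)
    (τ1 τ2 : ℝ) (hτ1 : τ1 ^ 2 = lam + 2 * mu) (hτ2 : τ2 ^ 2 = mu)
    (hτ12 : τ1 * τ2 = Real.sqrt (mu * (lam + 2 * mu))) :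
    ∀ b : ℝ,
      (τ1 + b * τ2) ^ 2 = (lam + 2 * mu) * dot (ξ1 + b • ξ2) (ξ1 + b • ξ2) ↔
      b = 0 ∨
        b = 2 * (Real.sqrt (mu * (lam + 2 * mu)) - (lam + 2 * mu) * dot ξ1 ξ2)
              / (lam + mu) :=
  ps_interaction_P_characterization_general lam mu hlm ξ1 ξ2 hξ1 hξ2 τ1 τ2 hτ1 hτ2 hτ12
end

section
/- Let λ, μ, A, B, C be real numbers, let ξ¹, ξ² ∈ ℝ³ be linearly independent, let g = g(ξ¹, ξ²) be the P–P interaction symbol matrix, and let ξ = ξ¹ + ξ². Let ξ^H ∈ ℝ³ be a unit vector lying in the plane spanned by ξ¹ and ξ² with ξ^H·ξ = 0 and ξ^H·ξ² ≥ 0. Define the angles α = arccos((ξ¹·ξ²)/(|ξ¹||ξ²|)) and ψ = arccos((ξ·ξ²)/(|ξ||ξ²|)). Then ξ^H·(g ξ) = (λ + 3μ + A + 2B)·|ξ¹|²·|ξ²|²·|ξ|·cos α·sin(2ψ − α). (The in-plane S-wave component of the symbol generated by the interaction of two P waves; it is generically nonvanishing exactly when λ + 3μ + A + 2B ≠ 0.)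 -/
/-!
Pairing the symbol with `ξH ⟂ ξ` kills every term of `g ξ` along `ξ`, leaving
`(λ + 3μ + A + 2B) (ξH·ξ²) (ξ¹·ξ²) (|ξ¹|² - |ξ²|²)`. Since `ξH` is the unit normal to `ξ` in the
plane of `ξ¹, ξ²`, the Gram determinant gives `|ξ| (ξH·ξ²) = |ξ¹||ξ²| sin α`, and in the triangle
with sides `ξ¹, ξ², ξ` also `ξH·ξ² = |ξ²| sin ψ`. With `cos α` and `cos ψ` read off from the dot
products, the remaining identity is trigonometric bookkeeping.
-/

open Real

/-- Euclidean norm on ℝ³. -/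
noncomputable def nrm (x : Fin 3 → ℝ) : ℝ := Real.sqrt (dot x x)

/-- The P–P interaction symbol matrix. -/
def gPP (lam mu A B C : ℝ) (ξ1 ξ2 : Fin 3 → ℝ) : Matrix (Fin 3) (Fin 3) ℝ :=
  fun m n =>
    (lam + 2 * B) *
        (dot ξ1 ξ1 * ξ2 m * ξ2 n + dot ξ2 ξ2 * ξ1 m * ξ1 n
          + (dot ξ1 ξ2) ^ 2 * (if m = n then 1 else 0))
      + (A + 3 * mu) * dot ξ1 ξ2 * (ξ1 m * ξ2 n + ξ2 m * ξ1 n)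
      + 2 * C * dot ξ1 ξ1 * dot ξ2 ξ2 * (if m = n then 1 else 0)

open Matrix

theorem dot_eq_dotProduct (x y : Fin 3 → ℝ) : dot x y = x ⬝ᵥ y := rfl

theorem dot_self_nonneg (x : Fin 3 → ℝ) : 0 ≤ dot x x :=
  Finset.sum_nonneg fun i _ => mul_self_nonneg (x i)

theorem dot_self_pos {x : Fin 3 → ℝ} (hx : x ≠ 0) : 0 < dot x x :=
  (dot_self_nonneg x).lt_of_ne' (dotProduct_self_eq_zero.not.2 hx)

theorem sq_nrm (x : Fin 3 → ℝ) : nrm x ^ 2 = dot x x :=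
  Real.sq_sqrt (dot_self_nonneg x)

theorem nrm_pos {x : Fin 3 → ℝ} (hx : x ≠ 0) : 0 < nrm x :=
  Real.sqrt_pos.2 (dot_self_pos hx)

theorem gPP_eq_sum_vecMulVec (lam mu A B C : ℝ) (a b : Fin 3 → ℝ) :
    gPP lam mu A B C a b =
      (lam + 2 * B) • ((a ⬝ᵥ a) • vecMulVec b b + (b ⬝ᵥ b) • vecMulVec a a + (a ⬝ᵥ b) ^ 2 • 1)
        + ((A + 3 * mu) * (a ⬝ᵥ b)) • (vecMulVec a b + vecMulVec b a)
        + (2 * C * (a ⬝ᵥ a) * (b ⬝ᵥ b)) • 1 := by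
  ext m n
  simp only [gPP, dot_eq_dotProduct, Matrix.add_apply, Matrix.smul_apply, vecMulVec_apply,
    one_apply, smul_eq_mul]
  split_ifs <;> ring

theorem dot_gPP_mulVec (lam mu A B C : ℝ) (a b x h : Fin 3 → ℝ) :
    dot h (gPP lam mu A B C a b *ᵥ x) =
      (lam + 2 * B) * (dot a a * dot b x * dot h b + dot b b * dot a x * dot h a
          + dot a b ^ 2 * dot h x)
        + (A + 3 * mu) * dot a b * (dot b x * dot h a + dot a x * dot h b)
        + 2 * C * dot a a * dot b b * dot h x := by
  simp only [gPP_eq_sum_vecMulVec, dot_eq_dotProduct, add_mulVec, smul_mulVec, vecMulVec_mulVec,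
    one_mulVec, dotProduct_add, dotProduct_smul, op_smul_eq_smul, smul_eq_mul]
  ring

theorem dot_gPP_mulVec_add_of_dot_add_eq_zero (lam mu A B C : ℝ) {a b h : Fin 3 → ℝ}
    (hperp : dot h (a + b) = 0) :
    dot h (gPP lam mu A B C a b *ᵥ (a + b)) =
      (lam + 3 * mu + A + 2 * B) * dot h b * dot a b * (dot a a - dot b b) := by
  rw [dot_gPP_mulVec]
  simp only [dot_eq_dotProduct, dotProduct_add, dotProduct_comm b a] at hperp ⊢
  linear_combination ((lam + 2 * B) * ((b ⬝ᵥ b) * (a ⬝ᵥ a + a ⬝ᵥ b) + (a ⬝ᵥ b) ^ 2)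
    + (A + 3 * mu) * (a ⬝ᵥ b) * (a ⬝ᵥ b + b ⬝ᵥ b) + 2 * C * (a ⬝ᵥ a) * (b ⬝ᵥ b)) * hperp

theorem sq_dotProduct_mul_dotProduct_add_self {R ι : Type*} [CommRing R] [Fintype ι]
    {a b h : ι → R} (hspan : h ∈ Submodule.span R {a, b}) (hunit : h ⬝ᵥ h = 1)
    (hperp : h ⬝ᵥ (a + b) = 0) :
    (h ⬝ᵥ b) ^ 2 * ((a + b) ⬝ᵥ (a + b)) = (a ⬝ᵥ a) * (b ⬝ᵥ b) - (a ⬝ᵥ b) ^ 2 := by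
  obtain ⟨p, q, rfl⟩ := Submodule.mem_span_pair.1 hspan
  simp only [dotProduct_add, add_dotProduct, dotProduct_smul, smul_dotProduct, smul_eq_mul,
    dotProduct_comm b a] at hunit hperp ⊢
  linear_combination ((a ⬝ᵥ a) * (b ⬝ᵥ b) - (a ⬝ᵥ b) ^ 2) * hunit
    + ((2 * (a ⬝ᵥ b) + b ⬝ᵥ b) * (p * (a ⬝ᵥ b) + q * (b ⬝ᵥ b))
      - (b ⬝ᵥ b) * (p * (a ⬝ᵥ a) + q * (a ⬝ᵥ b))) * hperp

theorem cos_arccos_and_sin_arccos {c s : ℝ} (hs : 0 ≤ s) (h : c ^ 2 + s ^ 2 = 1) :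
    cos (arccos c) = c ∧ sin (arccos c) = s := by
  have hc : |c| ≤ 1 := (sq_le_one_iff_abs_le_one c).1 (by nlinarith)
  refine ⟨cos_arccos (abs_le.1 hc).1 (abs_le.1 hc).2, ?_⟩
  rw [sin_arccos, show 1 - c ^ 2 = s ^ 2 by linarith, sqrt_sq hs]

theorem dot_mul_dot_mul_nrm_mul_cos_mul_sin {a b : Fin 3 → ℝ} (ha : a ≠ 0) (hb : b ≠ 0)
    (hab : a + b ≠ 0) {s : ℝ} (hs : 0 ≤ s)
    (hgram : s ^ 2 * dot (a + b) (a + b) = dot a a * dot b b - dot a b ^ 2) :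
    dot a a * dot b b * nrm (a + b) * cos (arccos (dot a b / (nrm a * nrm b)))
        * sin (2 * arccos (dot (a + b) b / (nrm (a + b) * nrm b))
          - arccos (dot a b / (nrm a * nrm b))) =
      s * dot a b * (dot a a - dot b b) := by
  have hna := nrm_pos ha
  have hnb := nrm_pos hb
  have hnx := nrm_pos hab
  have hlaw : dot (a + b) (a + b) = dot a a + 2 * dot a b + dot b b := by
    simp only [dot_eq_dotProduct, dotProduct_add, add_dotProduct, dotProduct_comm b a]; ring
  have hdot_add : dot (a + b) b = dot a b + dot b b := by
    simp only [dot_eq_dotProduct, add_dotProduct]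
  rw [← sq_nrm a, ← sq_nrm b, ← sq_nrm (a + b)] at hlaw hgram
  obtain ⟨hcα, hsα⟩ := cos_arccos_and_sin_arccos (c := dot a b / (nrm a * nrm b))
    (s := nrm (a + b) * s / (nrm a * nrm b)) (by positivity)
    (by field_simp; linear_combination hgram)
  obtain ⟨hcψ, hsψ⟩ := cos_arccos_and_sin_arccos
    (c := (dot a b + nrm b ^ 2) / (nrm (a + b) * nrm b)) (s := s / nrm b) (by positivity)
    (by field_simp; linear_combination hgram - nrm b ^ 2 * hlaw)
  rw [hdot_add, ← sq_nrm a, ← sq_nrm b, sin_sub, sin_two_mul, cos_two_mul, hcα, hsα, hcψ, hsψ]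
  field_simp
  linear_combination dot a b * s * nrm b ^ 2 * hlaw

/-- The in-plane S-wave component of the symbol generated by the interaction of
two P waves. -/
theorem pp_interaction_SH_symbol (lam mu A B C : ℝ) (ξ1 ξ2 : Fin 3 → ℝ)
    (hind : LinearIndependent ℝ ![ξ1, ξ2]) (ξH : Fin 3 → ℝ)
    (hHunit : dot ξH ξH = 1)
    (hHspan : ξH ∈ Submodule.span ℝ ({ξ1, ξ2} : Set (Fin 3 → ℝ)))
    (hHperp : dot ξH (ξ1 + ξ2) = 0) (hHpos : 0 ≤ dot ξH ξ2) :
    dot ξH ((gPP lam mu A B C ξ1 ξ2).mulVec (ξ1 + ξ2)) =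
      (lam + 3 * mu + A + 2 * B) * dot ξ1 ξ1 * dot ξ2 ξ2 * nrm (ξ1 + ξ2)
        * Real.cos (Real.arccos (dot ξ1 ξ2 / (nrm ξ1 * nrm ξ2)))
        * Real.sin (2 * Real.arccos (dot (ξ1 + ξ2) ξ2 / (nrm (ξ1 + ξ2) * nrm ξ2))
            - Real.arccos (dot ξ1 ξ2 / (nrm ξ1 * nrm ξ2))) := by
  have hξ1 : ξ1 ≠ 0 := hind.ne_zero 0
  have hξ2 : ξ2 ≠ 0 := hind.ne_zero 1
  have hξ : ξ1 + ξ2 ≠ 0 := fun h =>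
    one_ne_zero (LinearIndependent.pair_iff.1 hind 1 1 (by simpa using h)).1
  have hgram := sq_dotProduct_mul_dotProduct_add_self hHspan hHunit hHperp
  rw [dot_gPP_mulVec_add_of_dot_add_eq_zero _ _ _ _ _ hHperp]
  linear_combination -(lam + 3 * mu + A + 2 * B) *
    dot_mul_dot_mul_nrm_mul_cos_mul_sin hξ1 hξ2 hξ hHpos hgram
end
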